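/- Let $R$ be a local ring with maximal ideal $\mathfrak{m}$, $A$ an $R$-algebra that is a domain, $J$ an ideal of $R$ satisfying the cancellation property (if $g\zeta \in J\cdot A$ and $g \notin \mathfrak{m}A$ then $\zeta \in J\cdot A$). Suppose $\Phi = \begin{bmatrix}\alpha & \beta\\ \gamma & \delta\end{bmatrix}$ is a $q\times p$ matrix over $A$ with $\alpha$ of size $r\times r$ and $\det\alpha \notin \mathfrak{m}A$. If all entries of $(\det\alpha)\cdot\delta - \gamma\,\alpha^{\#}\beta$ lie in $J\cdot A$, then every $(r+1)\times(r+1)$ minor of $\Phi$ lies in $J\cdot A$. -/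

import Mathlib

open Matrix IsLocalRing

/-!
Put `g = det α`. Multiplying `Φ` by `g` and using `α · adj α = g · 1` gives the factorization
`g • Φ = [g • 1; γ · adj α] · [α  β] + [[0, 0], [0, g • δ - γ · adj α · β]]`,
whose first summand factors through `r` dimensions while the second has all its entries in `J·A`.
Hence every `(r+1) × (r+1)` minor of `g • Φ`, namely `g ^ (r+1)` times the corresponding minor
of `Φ`, lies in `J·A`, and cancelling `g` one factor at a time finishes the proof.
-/

namespace Matrix

variable {A : Type*} [CommRing A]

theorem det_mul_eq_zero_of_card_lt {m n : Type*} [Fintype m] [Fintype n] [DecidableEq m]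
    (h : Fintype.card n < Fintype.card m) (B : Matrix m n A) (T : Matrix n m A) :
    (B * T).det = 0 := by
  have hrows : (B * T).det = detRowAlternating (fun i => ∑ k, B i k • T k) := by
    congr 1
    ext i j
    simp [mul_apply, Finset.sum_apply]
  rw [hrows, ← AlternatingMap.coe_multilinearMap, MultilinearMap.map_sum]
  refine Finset.sum_eq_zero fun f _ => ?_
  have hf : ¬ Function.Injective f := fun hinj =>
    (Fintype.card_le_of_injective f hinj).not_gt h
  rw [MultilinearMap.map_smul_univ, AlternatingMap.coe_multilinearMap,
    detRowAlternating.map_eq_zero_of_not_injective (fun i => T (f i)) (fun hT => hf hT.of_comp),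
    smul_zero]

theorem det_sub_det_mem_of_forall_sub_mem {n : Type*} [Fintype n] [DecidableEq n] {I : Ideal A}
    {M N : Matrix n n A} (h : ∀ i j, M i j - N i j ∈ I) : M.det - N.det ∈ I := by
  rw [← Ideal.Quotient.eq, RingHom.map_det, RingHom.map_det]
  congr 1
  ext i j
  exact Ideal.Quotient.eq.mpr (h i j)

theorem det_submatrix_mul_add_mem {ι m n k : Type*} [Fintype ι] [DecidableEq ι] [Fintype k]
    (hk : Fintype.card k < Fintype.card ι) {I : Ideal A} (L : Matrix m k A) (U : Matrix k n A)
    {F : Matrix m n A} (hF : ∀ i j, F i j ∈ I) (rows : ι → m) (cols : ι → n) :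
    ((L * U + F).submatrix rows cols).det ∈ I := by
  have hdet : ((L * U + F).submatrix rows cols).det -
      (L.submatrix rows id * U.submatrix id cols).det ∈ I :=
    det_sub_det_mem_of_forall_sub_mem fun i j => by simpa [mul_apply] using hF (rows i) (cols j)
  simpa [det_mul_eq_zero_of_card_lt hk] using hdet

theorem det_smul_fromBlocks {r m n : Type*} [Fintype r] [DecidableEq r]
    (α : Matrix r r A) (β : Matrix r n A) (γ : Matrix m r A) (δ : Matrix m n A) :
    α.det • fromBlocks α β γ δ =
      fromRows (α.det • 1) (γ * α.adjugate) * fromCols α β +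
        fromBlocks 0 0 0 (α.det • δ - γ * α.adjugate * β) := by
  have hγ : γ * α.adjugate * α = α.det • γ := by
    rw [Matrix.mul_assoc, adjugate_mul, Matrix.mul_smul, Matrix.mul_one]
  rw [fromRows_mul_fromCols, fromBlocks_add, fromBlocks_smul, hγ]
  simp

end Matrix

theorem mem_of_pow_mul_mem {M : Type*} [Monoid M] {S : Set M} {g : M}
    (hS : ∀ ζ, g * ζ ∈ S → ζ ∈ S) (n : ℕ) {ζ : M} (hζ : g ^ n * ζ ∈ S) : ζ ∈ S := by
  induction n with
  | zero => simpa using hζ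
  | succ n ih => exact ih (hS _ (by rwa [← mul_assoc, ← pow_succ']))

theorem stmt7_general {R : Type*} [CommRing R] [IsLocalRing R] (J : Ideal R)
    {A : Type*} [CommRing A] [Algebra R A]
    {r s t : ℕ}
    (α : Matrix (Fin r) (Fin r) A) (β : Matrix (Fin r) (Fin t) A)
    (γ : Matrix (Fin s) (Fin r) A) (δ : Matrix (Fin s) (Fin t) A)
    (hcancel : ∀ g ζ : A, g ∉ Ideal.map (algebraMap R A) (maximalIdeal R) →
      g * ζ ∈ Ideal.map (algebraMap R A) J → ζ ∈ Ideal.map (algebraMap R A) J)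
    (hg : α.det ∉ Ideal.map (algebraMap R A) (maximalIdeal R))
    (hJA : ∀ i j, (α.det • δ - γ * α.adjugate * β) i j ∈ Ideal.map (algebraMap R A) J) :
    ∀ (rows : Fin (r + 1) → Fin r ⊕ Fin s) (cols : Fin (r + 1) → Fin r ⊕ Fin t),
      ((fromBlocks α β γ δ).submatrix rows cols).det ∈ Ideal.map (algebraMap R A) J := by
  intro rows cols
  have hF : ∀ i j, fromBlocks (0 : Matrix (Fin r) (Fin r) A) 0 0
      (α.det • δ - γ * α.adjugate * β) i j ∈ Ideal.map (algebraMap R A) J := by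
    rintro (i | i) (j | j)
    exacts [zero_mem _, zero_mem _, zero_mem _, hJA i j]
  refine mem_of_pow_mul_mem (fun ζ => hcancel _ ζ hg) (r + 1) ?_
  have hminor := det_submatrix_mul_add_mem (by simp)
    (fromRows (α.det • 1) (γ * α.adjugate)) (fromCols α β) hF rows cols
  rw [← det_smul_fromBlocks] at hminor
  change (α.det • (fromBlocks α β γ δ).submatrix rows cols).det ∈ _ at hminor
  rwa [det_smul, Fintype.card_fin] at hminor

/-- If `A` is a domain over a local ring `R`, the cancellation property holds for `J`,
`det α ∉ 𝔪A`, and all entries of `(det α)·δ - γ·α#·β` lie in `J·A`, then every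
`(r+1) × (r+1)` minor of `Φ = [[α,β],[γ,δ]]` lies in `J·A`. -/
theorem stmt7 {R : Type*} [CommRing R] [IsLocalRing R] (J : Ideal R)
    {A : Type*} [CommRing A] [IsDomain A] [Algebra R A]
    {r s t : ℕ}
    (α : Matrix (Fin r) (Fin r) A) (β : Matrix (Fin r) (Fin t) A)
    (γ : Matrix (Fin s) (Fin r) A) (δ : Matrix (Fin s) (Fin t) A)
    (hcancel : ∀ g ζ : A, g ∉ Ideal.map (algebraMap R A) (maximalIdeal R) →
      g * ζ ∈ Ideal.map (algebraMap R A) J → ζ ∈ Ideal.map (algebraMap R A) J)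
    (hg : α.det ∉ Ideal.map (algebraMap R A) (maximalIdeal R))
    (hJA : ∀ i j, (α.det • δ - γ * α.adjugate * β) i j ∈ Ideal.map (algebraMap R A) J) :
    ∀ (rows : Fin (r + 1) → Fin r ⊕ Fin s) (cols : Fin (r + 1) → Fin r ⊕ Fin t),
      ((fromBlocks α β γ δ).submatrix rows cols).det ∈ Ideal.map (algebraMap R A) J :=
  stmt7_general J α β γ δ hcancel hg hJA
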